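/- arXiv:2508.08834 — 2 statements merged into one kernel-verified Lean document; each statement's English description precedes it below -/
import Mathlib

section
/- For F ∈ ℝ^{3×3} with det F > 0 and μ, λ > 0, the energy W₂(F) := μ(tr(FᵀF) − 3) − μ ln det(FᵀF) + λ(det(FᵀF) − 1)² satisfies W₂(F) ≥ μ · dist²(F, SO(3)), where dist(F, SO(3)) denotes the Euclidean distance from F to the special orthogonal group. -/
open Matrix

/-- squared Frobenius norm -/
noncomputable def frobNorm3 (M : Matrix (Fin 3) (Fin 3) ℝ) : ℝ :=
  Real.sqrt (∑ i, ∑ j, (M i j) ^ 2)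

def SO3 : Set (Matrix (Fin 3) (Fin 3) ℝ) := {R | Rᵀ * R = 1 ∧ R.det = 1}

/-- Euclidean (Frobenius) distance from `F` to `SO(3)`. -/
noncomputable def distSO3 (F : Matrix (Fin 3) (Fin 3) ℝ) : ℝ :=
  sInf {d | ∃ R ∈ SO3, d = frobNorm3 (F - R)}

/-!
Write `F = R S` with `R ∈ SO(3)` and `S = √(FᵀF)` positive definite (polar decomposition).
Then `dist²(F, SO(3)) ≤ |F − R|² = tr(S²) − 2 tr S + 3`, while
`ln det(FᵀF) = 2 ln det S = 2 ∑ ln σᵢ ≤ 2 (tr S − 3)` by `ln x ≤ x − 1` on the eigenvalues `σᵢ`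
of `S`; the `λ`-term is nonnegative.
-/

section

variable {n : Type*} [Fintype n] [DecidableEq n]

theorem Matrix.PosDef.log_det_le_trace_sub_card {A : Matrix n n ℝ} (hA : A.PosDef) :
    Real.log A.det ≤ A.trace - Fintype.card n := by
  have hpos := hA.eigenvalues_pos
  rw [hA.isHermitian.det_eq_prod_eigenvalues, hA.isHermitian.trace_eq_sum_eigenvalues]
  simp only [RCLike.ofReal_real_eq_id, id]
  rw [Real.log_prod fun i _ => (hpos i).ne']
  calc ∑ i, Real.log (hA.1.eigenvalues i) ≤ ∑ i, (hA.1.eigenvalues i - 1) :=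
        Finset.sum_le_sum fun i _ => Real.log_le_sub_one_of_pos (hpos i)
    _ = _ := by simp [Finset.sum_sub_distrib]

open scoped MatrixOrder in
theorem Matrix.exists_posDef_mul_self_eq_transpose_mul_self {F : Matrix n n ℝ} (hF : F.det ≠ 0) :
    ∃ S : Matrix n n ℝ, S.PosDef ∧ S * S = Fᵀ * F := by
  have hFF : 0 ≤ Fᵀ * F := by
    simpa using (posSemidef_conjTranspose_mul_self F).nonneg
  have hSS := CFC.sqrt_mul_sqrt_self _ hFF
  refine ⟨CFC.sqrt (Fᵀ * F), ?_, hSS⟩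
  refine (CFC.sqrt_nonneg _).posSemidef.posDef_iff_det_ne_zero.mpr fun h => hF ?_
  have := congrArg det hSS
  rw [det_mul, det_mul, det_transpose, h, zero_mul] at this
  exact zero_eq_mul_self.mp this

theorem Matrix.exists_specialOrthogonal_mul_posDef_of_det_pos {F : Matrix n n ℝ} (hF : 0 < F.det) :
    ∃ R S : Matrix n n ℝ, Rᵀ * R = 1 ∧ R.det = 1 ∧ S.PosDef ∧ F = R * S := by
  obtain ⟨S, hS, hSS⟩ := exists_posDef_mul_self_eq_transpose_mul_self hF.ne'
  have hSdet : S.det = F.det := by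
    have := congrArg det hSS
    rw [det_mul, det_mul, det_transpose] at this
    nlinarith [hS.det_pos]
  have hSunit : IsUnit S.det := (hSdet ▸ hF).ne'.isUnit
  have hSsymm : Sᵀ = S := hS.isHermitian
  refine ⟨F * S⁻¹, S, ?_, ?_, hS, ?_⟩
  · rw [transpose_mul, transpose_nonsing_inv, hSsymm, Matrix.mul_assoc, ← Matrix.mul_assoc Fᵀ,
      ← hSS, Matrix.mul_assoc S, mul_nonsing_inv _ hSunit, Matrix.mul_one, nonsing_inv_mul _ hSunit]
  · rw [det_mul, det_nonsing_inv, hSdet, Ring.inverse_eq_inv, mul_inv_cancel₀ hF.ne']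
  · rw [Matrix.mul_assoc, nonsing_inv_mul _ hSunit, Matrix.mul_one]

theorem Matrix.trace_transpose_mul_self_mul_sub_of_orthogonal {R S : Matrix n n ℝ}
    (hR : Rᵀ * R = 1) (hS : Sᵀ = S) :
    ((R * S - R)ᵀ * (R * S - R)).trace = (S * S).trace - 2 * S.trace + Fintype.card n := by
  have : (R * S - R)ᵀ * (R * S - R) = S * S - 2 • S + 1 := by
    rw [← mul_sub_one, transpose_mul, Matrix.mul_assoc, ← Matrix.mul_assoc Rᵀ, hR,
      Matrix.one_mul, transpose_sub, hS, transpose_one]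
    noncomm_ring
  rw [this, trace_add, trace_sub, trace_smul, trace_one, nsmul_eq_mul]
  push_cast
  ring

end

theorem frobNorm3_sq (M : Matrix (Fin 3) (Fin 3) ℝ) : frobNorm3 M ^ 2 = (Mᵀ * M).trace := by
  rw [frobNorm3, Real.sq_sqrt (by positivity)]
  simp only [trace, diag, mul_apply, transpose_apply, sq]
  exact Finset.sum_comm

theorem distSO3_sq_le {R : Matrix (Fin 3) (Fin 3) ℝ} (hR : R ∈ SO3) (F : Matrix (Fin 3) (Fin 3) ℝ) :
    distSO3 F ^ 2 ≤ frobNorm3 (F - R) ^ 2 := by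
  have hnonneg : ∀ d ∈ {d | ∃ R ∈ SO3, d = frobNorm3 (F - R)}, 0 ≤ d := by
    rintro d ⟨R', -, rfl⟩
    exact Real.sqrt_nonneg _
  gcongr
  · exact Real.sInf_nonneg hnonneg
  · exact csInf_le ⟨0, hnonneg⟩ ⟨R, hR, rfl⟩

/-- `W₂(F) := μ(tr(FᵀF) − 3) − μ ln det(FᵀF) + λ(det(FᵀF) − 1)²` satisfies
`W₂(F) ≥ μ · dist²(F, SO(3))` whenever `det F > 0`. -/
theorem stmt_2 (μ lam : ℝ) (hμ : 0 < μ) (hlam : 0 < lam)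
    (F : Matrix (Fin 3) (Fin 3) ℝ) (hdet : 0 < F.det) :
    μ * ((Fᵀ * F).trace - 3) - μ * Real.log (Fᵀ * F).det
      + lam * ((Fᵀ * F).det - 1) ^ 2 ≥ μ * (distSO3 F) ^ 2 := by
  obtain ⟨R, S, hR, hRdet, hS, rfl⟩ := exists_specialOrthogonal_mul_posDef_of_det_pos hdet
  have hSsymm : Sᵀ = S := hS.isHermitian
  have hFF : (R * S)ᵀ * (R * S) = S * S := by
    rw [transpose_mul, Matrix.mul_assoc, ← Matrix.mul_assoc Rᵀ, hR, Matrix.one_mul, hSsymm]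
  have hlog : Real.log (S * S).det = 2 * Real.log S.det := by
    rw [det_mul, Real.log_mul hS.det_pos.ne' hS.det_pos.ne']
    ring
  have hdist : distSO3 (R * S) ^ 2 ≤ (S * S).trace - 2 * S.trace + 3 := by
    have h := distSO3_sq_le ⟨hR, hRdet⟩ (R * S)
    rwa [frobNorm3_sq, trace_transpose_mul_self_mul_sub_of_orthogonal hR hSsymm, Fintype.card_fin,
      Nat.cast_ofNat] at h
  have hlogdet : Real.log S.det ≤ S.trace - 3 := by
    simpa using hS.log_det_le_trace_sub_card
  rw [hFF, hlog]
  nlinarith [mul_le_mul_of_nonneg_left hdist hμ.le, mul_le_mul_of_nonneg_left hlogdet hμ.le,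
    mul_nonneg hlam.le (sq_nonneg ((S * S).det - 1))]
end

section
/- For any F ∈ ℝ^{3×3} with det F > 0, the Euclidean distance from F to SO(3) equals the Frobenius norm |√(FᵀF) − Id|, where √(FᵀF) is the positive definite square root of FᵀF. -/
open Matrix

/-!
Polar decomposition: `R = F S⁻¹` is orthogonal because `S² = FᵀF`, and `det R > 0`, so `R ∈ SO(3)`
and `F = R S`. Left multiplication by `R` preserves the Frobenius norm, so `|F - Q| = |S - U|` with
`U = RᵀQ` orthogonal, and `|S - U|² - |S - 1|² = tr ((1 - U) S (1 - U)ᵀ) ≥ 0` because `S` is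
positive semidefinite. Hence the infimum over `Q ∈ SO(3)` is attained at `Q = R`.
-/

namespace Matrix

variable {n : Type*} [Fintype n]

theorem sum_sum_sq_eq_trace_transpose_mul_self (M : Matrix n n ℝ) :
    ∑ i, ∑ j, M i j ^ 2 = (Mᵀ * M).trace := by
  simp only [trace, diag, mul_apply, transpose_apply, sq]
  exact Finset.sum_comm

theorem det_eq_one_of_transpose_mul_self_eq_one_of_pos [DecidableEq n] {R : Matrix n n ℝ}
    (hR : Rᵀ * R = 1) (hpos : 0 < R.det) : R.det = 1 := by
  have hsq : R.det * R.det = 1 := by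
    simpa only [det_mul, det_transpose, det_one] using congrArg det hR
  nlinarith

variable [DecidableEq n]

theorem transpose_mul_self_mul_inv_eq_one {F S : Matrix n n ℝ} (hS : S.PosDef)
    (hSsq : S * S = Fᵀ * F) : (F * S⁻¹)ᵀ * (F * S⁻¹) = 1 := by
  have hunit : IsUnit S.det := hS.isUnit.map detMonoidHom
  have hSsymm : Sᵀ = S := hS.isHermitian.eq
  rw [transpose_mul, transpose_nonsing_inv, hSsymm]
  calc S⁻¹ * Fᵀ * (F * S⁻¹) = S⁻¹ * (S * S) * S⁻¹ := by simp only [hSsq, Matrix.mul_assoc]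
    _ = 1 := by
      rw [← Matrix.mul_assoc, nonsing_inv_mul _ hunit, Matrix.one_mul, mul_nonsing_inv _ hunit]

theorem trace_sub_one_le_trace_sub_of_posSemidef {S U : Matrix n n ℝ} (hS : S.PosSemidef)
    (hU : Uᵀ * U = 1) :
    ((S - 1)ᵀ * (S - 1)).trace ≤ ((S - U)ᵀ * (S - U)).trace := by
  have hSsymm : Sᵀ = S := hS.isHermitian.eq
  have hpsd : ((1 - U) * S * (1 - U)ᵀ).PosSemidef := by
    simpa only [conjTranspose_eq_transpose_of_trivial] using hS.mul_mul_conjTranspose_same (1 - U)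
  have hexcess : ((S - U)ᵀ * (S - U)).trace - ((S - 1)ᵀ * (S - 1)).trace
      = ((1 - U) * S * (1 - U)ᵀ).trace := by
    have hUS : (U * S).trace = (S * U).trace := trace_mul_comm U S
    have hSUt : (S * Uᵀ).trace = (Uᵀ * S).trace := trace_mul_comm S Uᵀ
    have hUSUt : (U * S * Uᵀ).trace = S.trace := by
      rw [trace_mul_comm, ← Matrix.mul_assoc, hU, Matrix.one_mul]
    simp only [transpose_sub, transpose_one, hSsymm, sub_mul, mul_sub, Matrix.one_mul,
      Matrix.mul_one, hU, trace_sub, hUS, hSUt, hUSUt]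
    ring
  linarith [hpsd.trace_nonneg]

end Matrix

theorem frobNorm3_eq_sqrt_trace (M : Matrix (Fin 3) (Fin 3) ℝ) :
    frobNorm3 M = √((Mᵀ * M).trace) := by
  rw [frobNorm3, sum_sum_sq_eq_trace_transpose_mul_self]

theorem frobNorm3_mul_of_transpose_mul_self_eq_one {R : Matrix (Fin 3) (Fin 3) ℝ}
    (hR : Rᵀ * R = 1) (M : Matrix (Fin 3) (Fin 3) ℝ) : frobNorm3 (R * M) = frobNorm3 M := by
  rw [frobNorm3_eq_sqrt_trace, frobNorm3_eq_sqrt_trace, transpose_mul, Matrix.mul_assoc,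
    ← Matrix.mul_assoc Rᵀ, hR, Matrix.one_mul]

theorem exists_mem_SO3_mul_eq {F S : Matrix (Fin 3) (Fin 3) ℝ} (hdet : 0 < F.det)
    (hS : S.PosDef) (hSsq : S * S = Fᵀ * F) : ∃ R ∈ SO3, R * S = F := by
  have hunit : IsUnit S.det := hS.isUnit.map detMonoidHom
  have horth := transpose_mul_self_mul_inv_eq_one hS hSsq
  refine ⟨F * S⁻¹, ⟨horth, det_eq_one_of_transpose_mul_self_eq_one_of_pos horth ?_⟩,
    nonsing_inv_mul_cancel_right S F hunit⟩
  rw [det_mul, det_nonsing_inv, Ring.inverse_eq_inv']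
  exact mul_pos hdet (inv_pos.mpr hS.det_pos)

/-- For `F` with `det F > 0`, the distance from `F` to `SO(3)` equals `|√(FᵀF) − Id|`,
where `S = √(FᵀF)` is the positive definite square root of `FᵀF`. -/
theorem stmt_3 (F S : Matrix (Fin 3) (Fin 3) ℝ) (hdet : 0 < F.det)
    (hS : S.PosDef) (hSsq : S * S = Fᵀ * F) :
    distSO3 F = frobNorm3 (S - 1) := by
  obtain ⟨R, hRSO3, rfl⟩ := exists_mem_SO3_mul_eq hdet hS hSsq
  have hR : Rᵀ * R = 1 := hRSO3.1
  have hR' : R * Rᵀ = 1 := mul_eq_one_comm.mp hR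
  have hfactor : ∀ Q, R * S - Q = R * (S - Rᵀ * Q) := fun Q => by
    rw [mul_sub, ← Matrix.mul_assoc, hR', Matrix.one_mul]
  refine IsLeast.csInf_eq ⟨⟨R, hRSO3, ?_⟩, ?_⟩
  · rw [hfactor, hR, frobNorm3_mul_of_transpose_mul_self_eq_one hR]
  · rintro _ ⟨Q, ⟨hQ, -⟩, rfl⟩
    have hU : (Rᵀ * Q)ᵀ * (Rᵀ * Q) = 1 := by
      rw [transpose_mul, transpose_transpose, Matrix.mul_assoc, ← Matrix.mul_assoc R, hR',
        Matrix.one_mul, hQ]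
    rw [hfactor, frobNorm3_mul_of_transpose_mul_self_eq_one hR, frobNorm3_eq_sqrt_trace,
      frobNorm3_eq_sqrt_trace]
    exact Real.sqrt_le_sqrt (trace_sub_one_le_trace_sub_of_posSemidef hS.posSemidef hU)
end
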